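/- arXiv:2502.07102 — 3 statements merged into one kernel-verified Lean document; each statement's English description precedes it below -/
import Mathlib

section
/- Let a : ℝ → ℝ be continuous, k > 0, and let b : ℝ → ℝ be differentiable with b'(t) = k·ψ(a(t), b(t)) for all t ≥ 0, where ψ(a,b) = a if b > 0 and ψ(a,b) = max(0,a) if b ≤ 0. If b(0) ≥ 0, then b(t) ≥ 0 for all t ≥ 0; i.e., the projected dual dynamics render the nonnegative half-line forward invariant. -/
/-- The projection nonlinearity of the dual update: `ψ(a,b) = a` if `b > 0`,
and `ψ(a,b) = max 0 a` if `b ≤ 0`. -/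
noncomputable def psi (a b : ℝ) : ℝ := if 0 < b then a else max 0 a

/-!
A function that is nondecreasing wherever it is negative cannot cross from `[0, ∞)` into the
negative half-line: after the last time `s ≤ t` with `f s ≥ 0`, `f` is negative and hence
monotone, so `f t ≥ f s ≥ 0`.
The dual variable `b` is such a function because `ψ(a, b) ≥ 0` whenever `b ≤ 0` and `k > 0`.
-/

open Set

theorem nonneg_of_deriv_nonneg_of_neg {f : ℝ → ℝ} {t₀ : ℝ} (hf : Differentiable ℝ f)
    (h₀ : 0 ≤ f t₀) (hderiv : ∀ t, t₀ ≤ t → f t < 0 → 0 ≤ deriv f t) :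
    ∀ t, t₀ ≤ t → 0 ≤ f t := by
  intro t ht
  by_contra! hft
  obtain ⟨s, ⟨⟨hs₀, hst⟩, hfs⟩, hs_last⟩ : ∃ s, IsGreatest (Icc t₀ t ∩ {u | 0 ≤ f u}) s :=
    (isCompact_Icc.inter_right (isClosed_le continuous_const hf.continuous)).exists_isGreatest
      ⟨t₀, ⟨le_rfl, ht⟩, h₀⟩
  have hneg : ∀ u ∈ Ioc s t, f u < 0 := fun u hu => by
    by_contra! hfu
    exact (hs_last ⟨⟨hs₀.trans hu.1.le, hu.2⟩, hfu⟩).not_gt hu.1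
  have hmono : MonotoneOn f (Icc s t) :=
    monotoneOn_of_deriv_nonneg (convex_Icc s t) hf.continuous.continuousOn
      hf.differentiableOn fun u hu => by
        rw [interior_Icc] at hu
        exact hderiv u (hs₀.trans hu.1.le) (hneg u (Ioo_subset_Ioc_self hu))
  linarith [hmono (left_mem_Icc.2 hst) (right_mem_Icc.2 hst) hst, show 0 ≤ f s from hfs]

theorem psi_nonneg_of_nonpos (a : ℝ) {b : ℝ} (hb : b ≤ 0) : 0 ≤ psi a b := by
  rw [psi, if_neg hb.not_gt]
  exact le_max_left 0 a

theorem dual_nonneg_invariant_general (a : ℝ → ℝ) (k : ℝ) (hk : 0 < k)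
    (b : ℝ → ℝ) (hb : Differentiable ℝ b)
    (hderiv : ∀ t, 0 ≤ t → deriv b t = k * psi (a t) (b t))
    (h0 : 0 ≤ b 0) :
    ∀ t, 0 ≤ t → 0 ≤ b t :=
  nonneg_of_deriv_nonneg_of_neg hb h0 fun t ht hbt => by
    rw [hderiv t ht]
    exact mul_nonneg hk.le (psi_nonneg_of_nonpos (a t) hbt.le)

/-- **Forward invariance of the nonnegative half-line.** If `a` is continuous, `k > 0`,
`b` is differentiable with `b'(t) = k·ψ(a(t), b(t))` for all `t ≥ 0`, and `b(0) ≥ 0`,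
then `b(t) ≥ 0` for all `t ≥ 0`. -/
theorem dual_nonneg_invariant (a : ℝ → ℝ) (ha : Continuous a) (k : ℝ) (hk : 0 < k)
    (b : ℝ → ℝ) (hb : Differentiable ℝ b)
    (hderiv : ∀ t, 0 ≤ t → deriv b t = k * psi (a t) (b t))
    (h0 : 0 ≤ b 0) :
    ∀ t, 0 ≤ t → 0 ≤ b t :=
  dual_nonneg_invariant_general a k hk b hb hderiv h0
end

section
/- Fix n ∈ ℕ, a matrix G ∈ ℝ^{n×n}, vectors w, I_min, I_max, V_min, V_max ∈ ℝ^n, a scalar V_nom ∈ ℝ, and a differentiable function g : ℝ^n → ℝ. Suppose u, ζ_max, ζ_min, λ_max, λ_min ∈ ℝ^n with ζ_max, ζ_min, λ_max, λ_min componentwise nonnegative, and set y = G·u + w. Let K_p, K_d^I, K_d^V be diagonal matrices with strictly positive diagonal entries. Then the stationarity equations of the primal-dual controller, namely 0 = K_p·(∇g(u) + Gᵀ(ζ_max − ζ_min) + (λ_max − λ_min)), 0 = K_d^I·Ψ(y − I_max, ζ_max), 0 = K_d^I·Ψ(I_min − y, ζ_min), 0 = K_d^V·Ψ(V_nom·1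 + u − V_max, λ_max), and 0 = K_d^V·Ψ(V_min − V_nom·1 − u, λ_min), hold if and only if (u, ζ_max, ζ_min, λ_max, λ_min) satisfies the KKT conditions: 0 = ∇g(u) + Gᵀ(ζ_max − ζ_min) + (λ_max − λ_min); for every i, λ_max,i(V_nom + u_i − V_max,i) = 0, λ_min,i(V_min,i − V_nom − u_i) = 0, ζ_max,i(y_i − I_max,i) = 0, ζ_min,i(I_min,i − y_i) = 0; and for every i, V_min,i ≤ V_nom + u_i ≤ V_max,i and I_min,i ≤ y_i ≤ I_max,i. -/
open Matrix

/-- Componentwise application of `ψ` to pairs of vectors. -/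
noncomputable def Psi {n : ℕ} (a b : Fin n → ℝ) : Fin n → ℝ := fun i => psi (a i) (b i)

/-- Matrix-vector multiplication viewed as a map of `EuclideanSpace ℝ (Fin n)`. -/
noncomputable def emulVec {n : ℕ} (G : Matrix (Fin n) (Fin n) ℝ)
    (x : EuclideanSpace ℝ (Fin n)) : EuclideanSpace ℝ (Fin n) :=
  WithLp.toLp 2 (G.mulVec x)

lemma psi_eq_zero_iff (a b : ℝ) (hb : 0 ≤ b) :
    psi a b = 0 ↔ (b * a = 0 ∧ a ≤ 0) := by
  unfold psi
  split_ifs with h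
  · constructor
    · rintro rfl; exact ⟨mul_zero b, le_refl 0⟩
    · rintro ⟨h1, h2⟩
      exact (mul_eq_zero.mp h1).resolve_left (ne_of_gt h)
  · have hb0 : b = 0 := le_antisymm (not_lt.mp h) hb
    subst hb0
    simp [max_eq_left_iff, le_antisymm_iff]

lemma diag_mulVec_zero_iff {n : ℕ} (k : Fin n → ℝ) (hk : ∀ i, 0 < k i)
    (v : Fin n → ℝ) :
    (0 : Fin n → ℝ) = (Matrix.diagonal k).mulVec v ↔ ∀ i, v i = 0 := by
  constructor
  · intro h i
    have := congrFun h i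
    rw [Matrix.mulVec_diagonal] at this
    exact (mul_eq_zero.mp this.symm).resolve_left (ne_of_gt (hk i))
  · intro h
    funext i
    simp [Matrix.mulVec_diagonal, h i]

/-- **Steady states of the primal-dual controller are exactly the KKT points.**
With nonnegative multipliers and positive diagonal gains `K_p`, `K_d^I`, `K_d^V`,
the stationarity equations of the primal-dual controller hold if and only if
`(u, ζmax, ζmin, λmax, λmin)` satisfies the KKT conditions of the constrained
problem with output `y = G·u + w`. -/
theorem controller_steady_state_iff_KKT (n : ℕ) (G : Matrix (Fin n) (Fin n) ℝ)
    (w Imin Imax Vmin Vmax : EuclideanSpace ℝ (Fin n)) (Vnom : ℝ)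
    (g : EuclideanSpace ℝ (Fin n) → ℝ) (hg : Differentiable ℝ g)
    (u ζmax ζmin lmax lmin : EuclideanSpace ℝ (Fin n))
    (hζmax : ∀ i, 0 ≤ ζmax i) (hζmin : ∀ i, 0 ≤ ζmin i)
    (hlmax : ∀ i, 0 ≤ lmax i) (hlmin : ∀ i, 0 ≤ lmin i)
    (kp kdI kdV : Fin n → ℝ)
    (hkp : ∀ i, 0 < kp i) (hkdI : ∀ i, 0 < kdI i) (hkdV : ∀ i, 0 < kdV i)
    (y : EuclideanSpace ℝ (Fin n)) (hy : y = emulVec G u + w) :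
    ((0 : EuclideanSpace ℝ (Fin n)) =
        emulVec (Matrix.diagonal kp)
          (gradient g u + emulVec Gᵀ (ζmax - ζmin) + (lmax - lmin)) ∧
      (0 : Fin n → ℝ) = (Matrix.diagonal kdI).mulVec (Psi (y - Imax) ζmax) ∧
      (0 : Fin n → ℝ) = (Matrix.diagonal kdI).mulVec (Psi (Imin - y) ζmin) ∧
      (0 : Fin n → ℝ) =
        (Matrix.diagonal kdV).mulVec (Psi (fun i => Vnom + u i - Vmax i) lmax) ∧
      (0 : Fin n → ℝ) =
        (Matrix.diagonal kdV).mulVec (Psi (fun i => Vmin i - Vnom - u i) lmin))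
    ↔
    ((0 : EuclideanSpace ℝ (Fin n)) =
        gradient g u + emulVec Gᵀ (ζmax - ζmin) + (lmax - lmin) ∧
      (∀ i, lmax i * (Vnom + u i - Vmax i) = 0) ∧
      (∀ i, lmin i * (Vmin i - Vnom - u i) = 0) ∧
      (∀ i, ζmax i * (y i - Imax i) = 0) ∧
      (∀ i, ζmin i * (Imin i - y i) = 0) ∧
      (∀ i, Vmin i ≤ Vnom + u i ∧ Vnom + u i ≤ Vmax i) ∧
      (∀ i, Imin i ≤ y i ∧ y i ≤ Imax i)) := by

  have key : ∀ (k : Fin n → ℝ), (∀ i, 0 < k i) → ∀ (a b : Fin n → ℝ), (∀ i, 0 ≤ b i) →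
      (((0 : Fin n → ℝ) = (Matrix.diagonal k).mulVec (Psi a b)) ↔
      (∀ i, b i * a i = 0 ∧ a i ≤ 0)) := by
    intro k hk a b hb
    rw [diag_mulVec_zero_iff k hk]
    exact forall_congr' fun i => psi_eq_zero_iff (a i) (b i) (hb i)
  constructor
  · rintro ⟨h1, h2, h3, h4, h5⟩
    have h1' : ∀ i, (gradient g u + emulVec Gᵀ (ζmax - ζmin) + (lmax - lmin)) i = 0 :=
      (diag_mulVec_zero_iff kp hkp _).mp (congrArg WithLp.ofLp h1)
    have h2' := (key kdI hkdI _ _ hζmax).mp h2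
    have h3' := (key kdI hkdI _ _ hζmin).mp h3
    have h4' := (key kdV hkdV _ _ hlmax).mp h4
    have h5' := (key kdV hkdV _ _ hlmin).mp h5
    refine ⟨congrArg (WithLp.toLp 2) (funext fun i => (h1' i).symm), fun i => (h4' i).1, fun i => (h5' i).1,
      fun i => (h2' i).1, fun i => (h3' i).1, fun i => ⟨?_, ?_⟩, fun i => ⟨?_, ?_⟩⟩
    · have := (h5' i).2; linarith
    · have := (h4' i).2; linarith
    · have := (h3' i).2
      have h : Imin i - y i ≤ 0 := this
      linarith
    · have := (h2' i).2
      have h : y i - Imax i ≤ 0 := this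
      linarith
  · rintro ⟨h1, h2, h3, h4, h5, h6, h7⟩
    refine ⟨congrArg (WithLp.toLp 2) ((diag_mulVec_zero_iff kp hkp
        (gradient g u + emulVec Gᵀ (ζmax - ζmin) + (lmax - lmin)).ofLp).mpr
        fun i => (congrFun (congrArg WithLp.ofLp h1) i).symm),
      (key kdI hkdI _ _ hζmax).mpr fun i => ⟨h4 i, ?_⟩,
      (key kdI hkdI _ _ hζmin).mpr fun i => ⟨h5 i, ?_⟩,
      (key kdV hkdV _ _ hlmax).mpr fun i => ⟨h2 i, ?_⟩,
      (key kdV hkdV _ _ hlmin).mpr fun i => ⟨h3 i, ?_⟩⟩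
    · show y i - Imax i ≤ 0
      have := (h7 i).2; linarith
    · show Imin i - y i ≤ 0
      have := (h7 i).1; linarith
    · have := (h6 i).2; simp only []; linarith
    · have := (h6 i).1; simp only []; linarith
end

section
/- Fix n ∈ ℕ, a matrix G ∈ ℝ^{n×n}, vectors w, I_min, I_max, V_min, V_max ∈ ℝ^n, a scalar V_nom ∈ ℝ, and a convex differentiable function g : ℝ^n → ℝ, and let K_p, K_d^I, K_d^V be diagonal matrices with strictly positive diagonal entries. Let x_p, ζ_max, ζ_min, λ_max, λ_min : [0,∞) → ℝ^n be differentiable functions with ζ_max(t), ζ_min(t), λ_max(t), λ_min(t) componentwise nonnegative for all t ≥ 0, satisfying for all t ≥ 0 the closed-loop primal-dual dynamics: ẋ_p = −K_p(∇g(x_p) + Gᵀ(ζ_max − ζ_min) + (λ_max − λ_min)), ζ̇_max = K_d^I·Ψ(y − I_max, ζ_max), ζ̇_min = K_d^I·Ψ(I_min − y, ζ_min), λ̇_max = K_d^V·Ψ(V_nom·1 + x_p − V_max, λ_max), λ̇_min = K_d^V·Ψ(V_min − V_nom·1 − x_p, λ_min), where y(t) = G·x_p(t) + w. Let (u*, ζ*_max,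 ζ*_min, λ*_max, λ*_min) satisfy the KKT conditions of problem (8) with componentwise nonnegative multipliers. Then the Lyapunov function t ↦ ½(x_p(t) − u*)ᵀK_p⁻¹(x_p(t) − u*) + ½(ζ_max(t) − ζ*_max)ᵀ(K_d^I)⁻¹(ζ_max(t) − ζ*_max) + ½(ζ_min(t) − ζ*_min)ᵀ(K_d^I)⁻¹(ζ_min(t) − ζ*_min) + ½(λ_max(t) − λ*_max)ᵀ(K_d^V)⁻¹(λ_max(t) − λ*_max) + ½(λ_min(t) − λ*_min)ᵀ(K_d^V)⁻¹(λ_min(t) − λ*_min) is nonincreasing on [0,∞). -/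
open Matrix

lemma psi_mul_le {a z zs : ℝ} (hz : 0 ≤ z) (hzs : 0 ≤ zs) :
    (z - zs) * psi a z ≤ (z - zs) * a := by
  unfold psi
  split_ifs with h
  · exact le_rfl
  · have hz0 : z = 0 := le_antisymm (not_lt.mp h) hz
    subst hz0
    nlinarith [mul_le_mul_of_nonneg_left (le_max_right 0 a) hzs]

lemma diag_inv {n : ℕ} (k : Fin n → ℝ) (hk : ∀ i, k i ≠ 0) :
    (Matrix.diagonal k)⁻¹ = Matrix.diagonal (fun i => (k i)⁻¹) := by
  apply Matrix.inv_eq_right_inv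
  rw [Matrix.diagonal_mul_diagonal]
  have : (fun i => k i * (k i)⁻¹) = fun _ => (1:ℝ) := funext fun i => mul_inv_cancel₀ (hk i)
  rw [this, Matrix.diagonal_one]

lemma grad_mono {n : ℕ} {g : EuclideanSpace ℝ (Fin n) → ℝ}
    (hconv : ConvexOn ℝ Set.univ g) (hdiff : Differentiable ℝ g)
    (u x : EuclideanSpace ℝ (Fin n)) :
    inner (𝕜 := ℝ) (gradient g u) (x - u) ≤ inner (𝕜 := ℝ) (gradient g x) (x - u) := by
  set v := x - u with hv
  have hline : ∀ s : ℝ, HasDerivAt (fun s : ℝ => u + s • v) v s := by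
    intro s
    simpa using ((hasDerivAt_id s).smul_const v).const_add u
  have hφ : ∀ s : ℝ, HasDerivAt (fun s : ℝ => g (u + s • v))
      (inner (𝕜 := ℝ) (gradient g (u + s • v)) v) s := by
    intro s
    have h1 := ((hdiff (u + s • v)).hasGradientAt.hasFDerivAt).comp_hasDerivAt s (hline s)
    simp [InnerProductSpace.toDual_apply_apply] at h1 ⊢
    exact h1
  have hφconv : ConvexOn ℝ Set.univ (fun s : ℝ => g (u + s • v)) := by
    refine ⟨convex_univ, fun a _ b _ la lb hla hlb hab => ?_⟩
    have hkey : u + (la • a + lb • b) • v = la • (u + a • v) + lb • (u + b • v) := by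
      have : la • (u + a • v) + lb • (u + b • v)
          = (la + lb) • u + (la * a + lb * b) • v := by module
      rw [this, hab, one_smul]; simp [smul_eq_mul]
    dsimp only
    rw [smul_eq_mul, smul_eq_mul, show (la * a + lb * b) • v = (la • a + lb • b) • v by
      simp [smul_eq_mul], hkey]
    exact hconv.2 (Set.mem_univ _) (Set.mem_univ _) hla hlb hab
  have h0 := hφconv.le_slope_of_hasDerivAt (Set.mem_univ (0:ℝ)) (Set.mem_univ (1:ℝ))
    one_pos (hφ 0)
  have h1 := hφconv.slope_le_of_hasDerivAt (Set.mem_univ (0:ℝ)) (Set.mem_univ (1:ℝ))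
    one_pos (hφ 1)
  have h2 := h0.trans h1
  have e0 : u + (0:ℝ) • v = u := by simp
  have e1 : u + (1:ℝ) • v = x := by rw [hv]; simp
  rwa [e0, e1] at h2

lemma sum_mul_transpose_mulVec {n : ℕ} (G : Matrix (Fin n) (Fin n) ℝ) (p q : Fin n → ℝ) :
    ∑ i, p i * (Gᵀ.mulVec q) i = ∑ j, (G.mulVec p) j * q j := by
  simp only [Matrix.mulVec, dotProduct, Matrix.transpose_apply,
    Finset.sum_mul, Finset.mul_sum]
  rw [Finset.sum_comm]
  exact Finset.sum_congr rfl fun j _ => Finset.sum_congr rfl fun i _ => by ring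

lemma block_deriv {n : ℕ} (k : Fin n → ℝ) (hk : ∀ i, k i ≠ 0)
    (c : EuclideanSpace ℝ (Fin n)) (f : ℝ → EuclideanSpace ℝ (Fin n))
    (v : EuclideanSpace ℝ (Fin n)) (t : ℝ) (hf : HasDerivAt f v t) :
    HasDerivAt (fun t => (1/2 : ℝ) * ((f t - c) ⬝ᵥ (Matrix.diagonal k)⁻¹.mulVec (f t - c)))
      (∑ i, (k i)⁻¹ * ((f t i - c i) * v i)) t := by
  have hcomp : ∀ i, HasDerivAt (fun t => f t i) (v i) t := fun i =>
    (EuclideanSpace.proj (𝕜 := ℝ) i).hasFDerivAt.comp_hasDerivAt t hf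
  have hfun : (fun t => (1/2 : ℝ) * ((f t - c) ⬝ᵥ (Matrix.diagonal k)⁻¹.mulVec (f t - c)))
      = fun t => ∑ i, (1/2 : ℝ) * ((f t i - c i) * ((k i)⁻¹ * (f t i - c i))) := by
    funext s
    rw [diag_inv k hk]
    simp [dotProduct, Matrix.mulVec_diagonal, Finset.mul_sum]
  rw [hfun]
  have hsum : HasDerivAt
      (fun t => ∑ i, (1/2 : ℝ) * ((f t i - c i) * ((k i)⁻¹ * (f t i - c i))))
      (∑ i, (1/2 : ℝ) * (v i * ((k i)⁻¹ * (f t i - c i))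
        + (f t i - c i) * ((k i)⁻¹ * v i))) t := by
    apply HasDerivAt.fun_sum
    intro i _
    exact ((((hcomp i).sub_const (c i)).mul (((hcomp i).sub_const (c i)).const_mul
      ((k i)⁻¹))).const_mul (1/2 : ℝ))
  convert hsum using 1
  apply Finset.sum_congr rfl
  intro i _
  ring

/-- **Monotonicity of the Lyapunov function along closed-loop trajectories.**
Along any trajectory of the primal-dual secondary controller (with nonnegative dual
trajectories, positive diagonal gains and convex differentiable cost `g`), the quadratic
Lyapunov function centered at any KKT point of problem (8) is nonincreasing on `[0, ∞)`. -/
theorem lyapunov_nonincreasing (n : ℕ) (G : Matrix (Fin n) (Fin n) ℝ)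
    (w Imin Imax Vmin Vmax : EuclideanSpace ℝ (Fin n)) (Vnom : ℝ)
    (g : EuclideanSpace ℝ (Fin n) → ℝ)
    (hgconv : ConvexOn ℝ Set.univ g) (hgdiff : Differentiable ℝ g)
    (kp kdI kdV : Fin n → ℝ)
    (hkp : ∀ i, 0 < kp i) (hkdI : ∀ i, 0 < kdI i) (hkdV : ∀ i, 0 < kdV i)
    (xp ζmax ζmin lmax lmin : ℝ → EuclideanSpace ℝ (Fin n))
    (hζmaxpos : ∀ t, 0 ≤ t → ∀ i, 0 ≤ ζmax t i)
    (hζminpos : ∀ t, 0 ≤ t → ∀ i, 0 ≤ ζmin t i)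
    (hlmaxpos : ∀ t, 0 ≤ t → ∀ i, 0 ≤ lmax t i)
    (hlminpos : ∀ t, 0 ≤ t → ∀ i, 0 ≤ lmin t i)
    (y : ℝ → EuclideanSpace ℝ (Fin n)) (hy : ∀ t, y t = emulVec G (xp t) + w)
    (hxp : ∀ t, 0 ≤ t → HasDerivAt xp
      (-(emulVec (Matrix.diagonal kp)
        (gradient g (xp t) + emulVec Gᵀ (ζmax t - ζmin t) + (lmax t - lmin t)))) t)
    (hζmaxdyn : ∀ t, 0 ≤ t → HasDerivAt ζmax
      (emulVec (Matrix.diagonal kdI) (WithLp.toLp 2 (Psi (y t - Imax) (ζmax t)))) t)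
    (hζmindyn : ∀ t, 0 ≤ t → HasDerivAt ζmin
      (emulVec (Matrix.diagonal kdI) (WithLp.toLp 2 (Psi (Imin - y t) (ζmin t)))) t)
    (hlmaxdyn : ∀ t, 0 ≤ t → HasDerivAt lmax
      (emulVec (Matrix.diagonal kdV) (WithLp.toLp 2 (Psi (fun i => Vnom + xp t i - Vmax i) (lmax t)))) t)
    (hlmindyn : ∀ t, 0 ≤ t → HasDerivAt lmin
      (emulVec (Matrix.diagonal kdV) (WithLp.toLp 2 (Psi (fun i => Vmin i - Vnom - xp t i) (lmin t)))) t)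
    -- a KKT point of problem (8):
    (ustar ζsmax ζsmin lsmax lsmin : EuclideanSpace ℝ (Fin n))
    (hζsmax : ∀ i, 0 ≤ ζsmax i) (hζsmin : ∀ i, 0 ≤ ζsmin i)
    (hlsmax : ∀ i, 0 ≤ lsmax i) (hlsmin : ∀ i, 0 ≤ lsmin i)
    (hstat : (0 : EuclideanSpace ℝ (Fin n)) =
      gradient g ustar + emulVec Gᵀ (ζsmax - ζsmin) + (lsmax - lsmin))
    (hfeasI : ∀ i, Imin i ≤ (emulVec G ustar + w) i ∧ (emulVec G ustar + w) i ≤ Imax i)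
    (hfeasV : ∀ i, Vmin i ≤ Vnom + ustar i ∧ Vnom + ustar i ≤ Vmax i)
    (hcsζmax : ∀ i, ζsmax i * ((emulVec G ustar + w) i - Imax i) = 0)
    (hcsζmin : ∀ i, ζsmin i * (Imin i - (emulVec G ustar + w) i) = 0)
    (hcslmax : ∀ i, lsmax i * (Vnom + ustar i - Vmax i) = 0)
    (hcslmin : ∀ i, lsmin i * (Vmin i - Vnom - ustar i) = 0) :
    AntitoneOn (fun t =>
      (1 / 2) * ((xp t - ustar) ⬝ᵥ (Matrix.diagonal kp)⁻¹.mulVec (xp t - ustar)) +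
      (1 / 2) * ((ζmax t - ζsmax) ⬝ᵥ (Matrix.diagonal kdI)⁻¹.mulVec (ζmax t - ζsmax)) +
      (1 / 2) * ((ζmin t - ζsmin) ⬝ᵥ (Matrix.diagonal kdI)⁻¹.mulVec (ζmin t - ζsmin)) +
      (1 / 2) * ((lmax t - lsmax) ⬝ᵥ (Matrix.diagonal kdV)⁻¹.mulVec (lmax t - lsmax)) +
      (1 / 2) * ((lmin t - lsmin) ⬝ᵥ (Matrix.diagonal kdV)⁻¹.mulVec (lmin t - lsmin)))
      (Set.Ici (0 : ℝ)) := by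

  classical
  -- the derivative of the Lyapunov function
  set DD : ℝ → ℝ := fun t =>
      (∑ i, (kp i)⁻¹ * ((xp t i - ustar i) * ((-(emulVec (Matrix.diagonal kp)
        (gradient g (xp t) + emulVec Gᵀ (ζmax t - ζmin t) + (lmax t - lmin t)))) i)))
    + (∑ i, (kdI i)⁻¹ * ((ζmax t i - ζsmax i) *
        ((emulVec (Matrix.diagonal kdI) (WithLp.toLp 2 (Psi (y t - Imax) (ζmax t)))) i)))
    + (∑ i, (kdI i)⁻¹ * ((ζmin t i - ζsmin i) *
        ((emulVec (Matrix.diagonal kdI) (WithLp.toLp 2 (Psi (Imin - y t) (ζmin t)))) i)))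
    + (∑ i, (kdV i)⁻¹ * ((lmax t i - lsmax i) *
        ((emulVec (Matrix.diagonal kdV) (WithLp.toLp 2 (Psi (fun i => Vnom + xp t i - Vmax i) (lmax t)))) i)))
    + (∑ i, (kdV i)⁻¹ * ((lmin t i - lsmin i) *
        ((emulVec (Matrix.diagonal kdV) (WithLp.toLp 2 (Psi (fun i => Vmin i - Vnom - xp t i) (lmin t)))) i)))
    with hDDdef
  have hV : ∀ t ∈ Set.Ici (0:ℝ), HasDerivAt (fun t =>
      (1 / 2) * ((xp t - ustar) ⬝ᵥ (Matrix.diagonal kp)⁻¹.mulVec (xp t - ustar)) +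
      (1 / 2) * ((ζmax t - ζsmax) ⬝ᵥ (Matrix.diagonal kdI)⁻¹.mulVec (ζmax t - ζsmax)) +
      (1 / 2) * ((ζmin t - ζsmin) ⬝ᵥ (Matrix.diagonal kdI)⁻¹.mulVec (ζmin t - ζsmin)) +
      (1 / 2) * ((lmax t - lsmax) ⬝ᵥ (Matrix.diagonal kdV)⁻¹.mulVec (lmax t - lsmax)) +
      (1 / 2) * ((lmin t - lsmin) ⬝ᵥ (Matrix.diagonal kdV)⁻¹.mulVec (lmin t - lsmin)))
      (DD t) t := by
    intro t ht
    exact ((((block_deriv kp (fun i => (hkp i).ne') ustar xp _ t (hxp t ht)).add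
      (block_deriv kdI (fun i => (hkdI i).ne') ζsmax ζmax _ t (hζmaxdyn t ht))).add
      (block_deriv kdI (fun i => (hkdI i).ne') ζsmin ζmin _ t (hζmindyn t ht))).add
      (block_deriv kdV (fun i => (hkdV i).ne') lsmax lmax _ t (hlmaxdyn t ht))).add
      (block_deriv kdV (fun i => (hkdV i).ne') lsmin lmin _ t (hlmindyn t ht))
  -- the main estimate : DD t ≤ 0 for t ≥ 0
  have key : ∀ t ∈ Set.Ici (0:ℝ), DD t ≤ 0 := by
    intro t ht
    rw [Set.mem_Ici] at ht
    -- Stage A : simplify the five sums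
    have eD : DD t =
        (∑ i, -((xp t i - ustar i) * gradient g (xp t) i))
      + ((∑ i, -((xp t i - ustar i) * (Gᵀ.mulVec (ζmax t - ζmin t) i
            + (lmax t i - lmin t i))))
        + ((∑ i, (ζmax t i - ζsmax i) * psi (y t i - Imax i) (ζmax t i))
        + ((∑ i, (ζmin t i - ζsmin i) * psi (Imin i - y t i) (ζmin t i))
        + ((∑ i, (lmax t i - lsmax i) * psi (Vnom + xp t i - Vmax i) (lmax t i))
        + (∑ i, (lmin t i - lsmin i) * psi (Vmin i - Vnom - xp t i) (lmin t i)))))) := by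
      simp only [hDDdef]
      have e1 : (∑ i, (kp i)⁻¹ * ((xp t i - ustar i) * ((-(emulVec (Matrix.diagonal kp)
          (gradient g (xp t) + emulVec Gᵀ (ζmax t - ζmin t) + (lmax t - lmin t)))) i)))
          = (∑ i, -((xp t i - ustar i) * gradient g (xp t) i))
          + (∑ i, -((xp t i - ustar i) * (Gᵀ.mulVec (ζmax t - ζmin t) i
            + (lmax t i - lmin t i)))) := by
        rw [← Finset.sum_add_distrib]
        apply Finset.sum_congr rfl
        intro i _
        have hk : kp i ≠ 0 := (hkp i).ne'
        simp only [emulVec, PiLp.neg_apply, PiLp.add_apply, PiLp.sub_apply,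
          Matrix.mulVec_diagonal, PiLp.toLp_apply, WithLp.ofLp_add, WithLp.ofLp_sub, Pi.add_apply, Pi.sub_apply]
        field_simp
        ring
      have e2 : (∑ i, (kdI i)⁻¹ * ((ζmax t i - ζsmax i) *
          ((emulVec (Matrix.diagonal kdI) (WithLp.toLp 2 (Psi (y t - Imax) (ζmax t)))) i)))
          = ∑ i, (ζmax t i - ζsmax i) * psi (y t i - Imax i) (ζmax t i) := by
        apply Finset.sum_congr rfl
        intro i _
        have hk : kdI i ≠ 0 := (hkdI i).ne'
        simp only [emulVec, Psi, Matrix.mulVec_diagonal, PiLp.sub_apply, Pi.sub_apply]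
        field_simp
      have e3 : (∑ i, (kdI i)⁻¹ * ((ζmin t i - ζsmin i) *
          ((emulVec (Matrix.diagonal kdI) (WithLp.toLp 2 (Psi (Imin - y t) (ζmin t)))) i)))
          = ∑ i, (ζmin t i - ζsmin i) * psi (Imin i - y t i) (ζmin t i) := by
        apply Finset.sum_congr rfl
        intro i _
        have hk : kdI i ≠ 0 := (hkdI i).ne'
        simp only [emulVec, Psi, Matrix.mulVec_diagonal, PiLp.sub_apply, Pi.sub_apply]
        field_simp
      have e4 : (∑ i, (kdV i)⁻¹ * ((lmax t i - lsmax i) *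
          ((emulVec (Matrix.diagonal kdV)
            (WithLp.toLp 2 (Psi (fun i => Vnom + xp t i - Vmax i) (lmax t)))) i)))
          = ∑ i, (lmax t i - lsmax i) * psi (Vnom + xp t i - Vmax i) (lmax t i) := by
        apply Finset.sum_congr rfl
        intro i _
        have hk : kdV i ≠ 0 := (hkdV i).ne'
        simp only [emulVec, Psi, Matrix.mulVec_diagonal]
        field_simp
      have e5 : (∑ i, (kdV i)⁻¹ * ((lmin t i - lsmin i) *
          ((emulVec (Matrix.diagonal kdV)
            (WithLp.toLp 2 (Psi (fun i => Vmin i - Vnom - xp t i) (lmin t)))) i)))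
          = ∑ i, (lmin t i - lsmin i) * psi (Vmin i - Vnom - xp t i) (lmin t i) := by
        apply Finset.sum_congr rfl
        intro i _
        have hk : kdV i ≠ 0 := (hkdV i).ne'
        simp only [emulVec, Psi, Matrix.mulVec_diagonal]
        field_simp
      rw [e1, e2, e3, e4, e5]
      ring
    -- Stage B : gradient monotonicity
    have hgradle : (∑ i, -((xp t i - ustar i) * gradient g (xp t) i))
        ≤ ∑ i, -((xp t i - ustar i) * gradient g ustar i) := by
      have hmono := grad_mono hgconv hgdiff ustar (xp t)
      simp only [PiLp.inner_apply, RCLike.inner_apply, starRingEnd_apply, star_trivial,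
        PiLp.sub_apply] at hmono
      have l1 : (∑ i, -((xp t i - ustar i) * gradient g (xp t) i))
          = -∑ i, gradient g (xp t) i * (xp t i - ustar i) := by
        rw [← Finset.sum_neg_distrib]
        exact Finset.sum_congr rfl fun i _ => by ring
      have l2 : (∑ i, -((xp t i - ustar i) * gradient g ustar i))
          = -∑ i, gradient g ustar i * (xp t i - ustar i) := by
        rw [← Finset.sum_neg_distrib]
        exact Finset.sum_congr rfl fun i _ => by ring
      rw [l1, l2]
      exact neg_le_neg (by simpa only [mul_comm] using hmono)
    -- Stage B' : psi bounds
    have hp1 : (∑ i, (ζmax t i - ζsmax i) * psi (y t i - Imax i) (ζmax t i))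
        ≤ ∑ i, (ζmax t i - ζsmax i) * (y t i - Imax i) :=
      Finset.sum_le_sum fun i _ => psi_mul_le (hζmaxpos t ht i) (hζsmax i)
    have hp2 : (∑ i, (ζmin t i - ζsmin i) * psi (Imin i - y t i) (ζmin t i))
        ≤ ∑ i, (ζmin t i - ζsmin i) * (Imin i - y t i) :=
      Finset.sum_le_sum fun i _ => psi_mul_le (hζminpos t ht i) (hζsmin i)
    have hp3 : (∑ i, (lmax t i - lsmax i) * psi (Vnom + xp t i - Vmax i) (lmax t i))
        ≤ ∑ i, (lmax t i - lsmax i) * (Vnom + xp t i - Vmax i) :=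
      Finset.sum_le_sum fun i _ => psi_mul_le (hlmaxpos t ht i) (hlsmax i)
    have hp4 : (∑ i, (lmin t i - lsmin i) * psi (Vmin i - Vnom - xp t i) (lmin t i))
        ≤ ∑ i, (lmin t i - lsmin i) * (Vmin i - Vnom - xp t i) :=
      Finset.sum_le_sum fun i _ => psi_mul_le (hlminpos t ht i) (hlsmin i)
    -- stationarity, componentwise
    have hstat' : ∀ i, gradient g ustar i
        = -(Gᵀ.mulVec (ζsmax - ζsmin) i + (lsmax i - lsmin i)) := by
      intro i
      have h := congrArg (fun v : EuclideanSpace ℝ (Fin n) => v i) hstat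
      simp only [emulVec, PiLp.add_apply, PiLp.sub_apply, PiLp.zero_apply, WithLp.ofLp_sub] at h
      linarith
    -- the bound after all the pointwise estimates
    have hEbound : DD t ≤
        (∑ i, -((xp t i - ustar i) * gradient g ustar i))
      + ((∑ i, -((xp t i - ustar i) * (Gᵀ.mulVec (ζmax t - ζmin t) i
            + (lmax t i - lmin t i))))
        + ((∑ i, (ζmax t i - ζsmax i) * (y t i - Imax i))
        + ((∑ i, (ζmin t i - ζsmin i) * (Imin i - y t i))
        + ((∑ i, (lmax t i - lsmax i) * (Vnom + xp t i - Vmax i))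
        + (∑ i, (lmin t i - lsmin i) * (Vmin i - Vnom - xp t i)))))) := by
      rw [eD]
      linarith [hgradle, hp1, hp2, hp3, hp4]
    -- now rewrite the right-hand side and show that it is ≤ 0
    -- abbreviate y*
    have hGd : ∀ j, G.mulVec (fun i => xp t i - ustar i) j
        = y t j - (emulVec G ustar + w) j := by
      intro j
      have hsplit : G.mulVec (fun i => xp t i - ustar i) j
          = G.mulVec (xp t) j - G.mulVec ustar j := by
        simp only [Matrix.mulVec, dotProduct, mul_sub]
        rw [Finset.sum_sub_distrib]
      rw [hsplit, hy t]
      simp only [emulVec, PiLp.add_apply]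
      ring
    -- transpose swaps
    have swap1 : (∑ i, (xp t i - ustar i) * Gᵀ.mulVec (ζmax t - ζmin t) i)
        = ∑ j, (y t j - (emulVec G ustar + w) j) * (ζmax t j - ζmin t j) := by
      rw [sum_mul_transpose_mulVec G (fun i => xp t i - ustar i) (ζmax t - ζmin t)]
      apply Finset.sum_congr rfl
      intro j _
      rw [hGd j]
      simp only [PiLp.sub_apply, Pi.sub_apply]
    have swap2 : (∑ i, (xp t i - ustar i) * Gᵀ.mulVec (ζsmax - ζsmin) i)
        = ∑ j, (y t j - (emulVec G ustar + w) j) * (ζsmax j - ζsmin j) := by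
      rw [sum_mul_transpose_mulVec G (fun i => xp t i - ustar i) (ζsmax - ζsmin)]
      apply Finset.sum_congr rfl
      intro j _
      rw [hGd j]
      simp only [PiLp.sub_apply, Pi.sub_apply]
    -- final algebraic identity
    have hfinal :
        (∑ i, -((xp t i - ustar i) * gradient g ustar i))
      + ((∑ i, -((xp t i - ustar i) * (Gᵀ.mulVec (ζmax t - ζmin t) i
            + (lmax t i - lmin t i))))
        + ((∑ i, (ζmax t i - ζsmax i) * (y t i - Imax i))
        + ((∑ i, (ζmin t i - ζsmin i) * (Imin i - y t i))
        + ((∑ i, (lmax t i - lsmax i) * (Vnom + xp t i - Vmax i))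
        + (∑ i, (lmin t i - lsmin i) * (Vmin i - Vnom - xp t i))))))
        = ∑ j, (ζmax t j * ((emulVec G ustar + w) j - Imax j)
            - ζsmax j * ((emulVec G ustar + w) j - Imax j)
            + (ζmin t j * (Imin j - (emulVec G ustar + w) j)
            - ζsmin j * (Imin j - (emulVec G ustar + w) j))
            + (lmax t j * (Vnom + ustar j - Vmax j)
            - lsmax j * (Vnom + ustar j - Vmax j))
            + (lmin t j * (Vmin j - Vnom - ustar j)
            - lsmin j * (Vmin j - Vnom - ustar j))) := by
      have hg1 : (∑ i, -((xp t i - ustar i) * gradient g ustar i))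
          = (∑ i, (xp t i - ustar i) * Gᵀ.mulVec (ζsmax - ζsmin) i)
            + ∑ i, (xp t i - ustar i) * (lsmax i - lsmin i) := by
        rw [← Finset.sum_add_distrib]
        apply Finset.sum_congr rfl
        intro i _
        rw [hstat' i]
        ring
      have hg2 : (∑ i, -((xp t i - ustar i) * (Gᵀ.mulVec (ζmax t - ζmin t) i
            + (lmax t i - lmin t i))))
          = -((∑ i, (xp t i - ustar i) * Gᵀ.mulVec (ζmax t - ζmin t) i)
            + ∑ i, (xp t i - ustar i) * (lmax t i - lmin t i)) := by
        rw [← Finset.sum_add_distrib, ← Finset.sum_neg_distrib]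
        apply Finset.sum_congr rfl
        intro i _
        ring
      rw [hg1, hg2, swap1, swap2]
      simp only [neg_add, ← Finset.sum_neg_distrib, ← Finset.sum_add_distrib]
      apply Finset.sum_congr rfl
      intro j _
      ring
    have hsumnonpos : (∑ j, (ζmax t j * ((emulVec G ustar + w) j - Imax j)
            - ζsmax j * ((emulVec G ustar + w) j - Imax j)
            + (ζmin t j * (Imin j - (emulVec G ustar + w) j)
            - ζsmin j * (Imin j - (emulVec G ustar + w) j))
            + (lmax t j * (Vnom + ustar j - Vmax j)
            - lsmax j * (Vnom + ustar j - Vmax j))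
            + (lmin t j * (Vmin j - Vnom - ustar j)
            - lsmin j * (Vmin j - Vnom - ustar j)))) ≤ 0 := by
      apply Finset.sum_nonpos
      intro j _
      obtain ⟨hI1, hI2⟩ := hfeasI j
      obtain ⟨hV1, hV2⟩ := hfeasV j
      have e1 : ζmax t j * ((emulVec G ustar + w) j - Imax j) ≤ 0 :=
        mul_nonpos_of_nonneg_of_nonpos (hζmaxpos t ht j) (by linarith)
      have e2 : ζmin t j * (Imin j - (emulVec G ustar + w) j) ≤ 0 :=
        mul_nonpos_of_nonneg_of_nonpos (hζminpos t ht j) (by linarith)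
      have e3 : lmax t j * (Vnom + ustar j - Vmax j) ≤ 0 :=
        mul_nonpos_of_nonneg_of_nonpos (hlmaxpos t ht j) (by linarith)
      have e4 : lmin t j * (Vmin j - Vnom - ustar j) ≤ 0 :=
        mul_nonpos_of_nonneg_of_nonpos (hlminpos t ht j) (by linarith)
      linarith [hcsζmax j, hcsζmin j, hcslmax j, hcslmin j]
    calc DD t ≤ _ := hEbound
    _ = _ := hfinal
    _ ≤ 0 := hsumnonpos
  -- conclude via the mean value inequality
  refine antitoneOn_of_deriv_nonpos (convex_Ici 0)
    (fun t ht => (hV t ht).continuousAt.continuousWithinAt) (fun t ht => ?_) (fun t ht => ?_)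
  · rw [interior_Ici] at ht
    exact (hV t (Set.mem_Ici.mpr (le_of_lt ht))).differentiableAt.differentiableWithinAt
  · rw [interior_Ici] at ht
    rw [(hV t (Set.mem_Ici.mpr (le_of_lt ht))).deriv]
    exact key t (Set.mem_Ici.mpr (le_of_lt ht))
end
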